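/- Let (C, E, s) be an extriangulated category satisfying Condition (WIC). Suppose given a 3×3 diagram whose bottom two rows A → B → C --δ--> and A' → B' → C' --δ'--> are E-triangles, whose three columns K → A → A', K' → B → B', K'' → C → C' are E-triangles, and in which the two lower squares commute appropriately (forming morphisms of E-triangles in rows and columns). If the morphism y: B → C is a retraction (split epimorphism), then there exists an E-triangle K → K' → K'' --δ''--> completing the diagram so that all rows and columns are E-triangles and all squares commute compatibly, i.e., (k,k',k''), (a,b,c), (m,x,x'), (n',y,y') are morphisms of E-triangles. -/

import Mathlib

open CategoryTheory Limits

universe w v u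

/-- An extriangulated category structure on an additive category `𝒞`, in the sense of
Nakaoka–Palu: a biadditive `Ab`-valued functor `E` together with an additive realization,
encoded via the predicate `IsTriangle x y δ` meaning that `A ⟶x B ⟶y X` realizes
`δ ∈ E(X,A)`, satisfying (ET1)–(ET4) and their duals. -/
structure ExtriangulatedStructure (𝒞 : Type u) [Category.{v} 𝒞] [Preadditive 𝒞]
    [HasBinaryBiproducts 𝒞] where
  E : 𝒞 → 𝒞 → AddCommGrpCat.{w}
  pull : ∀ {X' X A : 𝒞}, (X' ⟶ X) → E X A → E X' A
  push : ∀ {X A A' : 𝒞}, (A ⟶ A') → E X A → E X A'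
  pull_id : ∀ {X A : 𝒞} (δ : E X A), pull (𝟙 X) δ = δ
  push_id : ∀ {X A : 𝒞} (δ : E X A), push (𝟙 A) δ = δ
  pull_comp : ∀ {X'' X' X A : 𝒞} (c' : X'' ⟶ X') (c : X' ⟶ X) (δ : E X A),
      pull (c' ≫ c) δ = pull c' (pull c δ)
  push_comp : ∀ {X A A' A'' : 𝒞} (a : A ⟶ A') (a' : A' ⟶ A'') (δ : E X A),
      push (a ≫ a') δ = push a' (push a δ)
  pull_push : ∀ {X' X A A' : 𝒞} (c : X' ⟶ X) (a : A ⟶ A') (δ : E X A),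
      pull c (push a δ) = push a (pull c δ)
  pull_add : ∀ {X' X A : 𝒞} (c : X' ⟶ X) (δ δ' : E X A),
      pull c (δ + δ') = pull c δ + pull c δ'
  push_add : ∀ {X A A' : 𝒞} (a : A ⟶ A') (δ δ' : E X A),
      push a (δ + δ') = push a δ + push a δ'
  add_pull : ∀ {X' X A : 𝒞} (c c' : X' ⟶ X) (δ : E X A),
      pull (c + c') δ = pull c δ + pull c' δ
  add_push : ∀ {X A A' : 𝒞} (a a' : A ⟶ A') (δ : E X A),
      push (a + a') δ = push a δ + push a' δ
  IsTriangle : ∀ {A B X : 𝒞}, (A ⟶ B) → (B ⟶ X) → E X A → Prop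
  realize_exists : ∀ {X A : 𝒞} (δ : E X A),
      ∃ (B : 𝒞) (x : A ⟶ B) (y : B ⟶ X), IsTriangle x y δ
  realize_zero : ∀ (A X : 𝒞),
      IsTriangle (biprod.inl : A ⟶ A ⊞ X) (biprod.snd : A ⊞ X ⟶ X) (0 : E X A)
  realize_sum : ∀ {A B X A' B' X' : 𝒞} (x : A ⟶ B) (y : B ⟶ X) (δ : E X A)
      (x' : A' ⟶ B') (y' : B' ⟶ X') (δ' : E X' A'),
      IsTriangle x y δ → IsTriangle x' y' δ' →
      IsTriangle (biprod.map x x') (biprod.map y y')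
        (push biprod.inl (pull biprod.fst δ) + push biprod.inr (pull biprod.snd δ'))
  realize_iso : ∀ {A B B' X : 𝒞} (x : A ⟶ B) (y : B ⟶ X) (δ : E X A) (b : B ≅ B'),
      IsTriangle x y δ → IsTriangle (x ≫ b.hom) (b.inv ≫ y) δ
  realize_mor : ∀ {A B X A' B' X' : 𝒞} {x : A ⟶ B} {y : B ⟶ X} {δ : E X A}
      {x' : A' ⟶ B'} {y' : B' ⟶ X'} {δ' : E X' A'} (a : A ⟶ A') (c : X ⟶ X'),
      IsTriangle x y δ → IsTriangle x' y' δ' → push a δ = pull c δ' →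
      ∃ b : B ⟶ B', x ≫ b = a ≫ x' ∧ y ≫ c = b ≫ y'
  ET3 : ∀ {A B X A' B' X' : 𝒞} {x : A ⟶ B} {y : B ⟶ X} {δ : E X A}
      {x' : A' ⟶ B'} {y' : B' ⟶ X'} {δ' : E X' A'} (a : A ⟶ A') (b : B ⟶ B'),
      IsTriangle x y δ → IsTriangle x' y' δ' → x ≫ b = a ≫ x' →
      ∃ c : X ⟶ X', push a δ = pull c δ' ∧ y ≫ c = b ≫ y'
  ET3op : ∀ {A B X A' B' X' : 𝒞} {x : A ⟶ B} {y : B ⟶ X} {δ : E X A}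
      {x' : A' ⟶ B'} {y' : B' ⟶ X'} {δ' : E X' A'} (b : B ⟶ B') (c : X ⟶ X'),
      IsTriangle x y δ → IsTriangle x' y' δ' → y ≫ c = b ≫ y' →
      ∃ a : A ⟶ A', push a δ = pull c δ' ∧ x ≫ b = a ≫ x'
  ET4 : ∀ {A B D Cv F : 𝒞} (f : A ⟶ B) (f' : B ⟶ D) (δ : E D A)
      (g : B ⟶ Cv) (g' : Cv ⟶ F) (δ' : E F B),
      IsTriangle f f' δ → IsTriangle g g' δ' →
      ∃ (E₀ : 𝒞) (h : A ⟶ Cv) (h' : Cv ⟶ E₀) (d : D ⟶ E₀) (e : E₀ ⟶ F) (δ'' : E E₀ A),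
        IsTriangle h h' δ'' ∧ IsTriangle d e (push f' δ') ∧
        h = f ≫ g ∧ f' ≫ d = g ≫ h' ∧ g' = h' ≫ e ∧
        pull d δ'' = δ ∧ push f δ'' = pull e δ'
  ET4op : ∀ {D B A F Cv : 𝒞} (i : D ⟶ B) (p : B ⟶ A) (δ : E A D)
      (j : F ⟶ Cv) (q : Cv ⟶ B) (δ' : E B F),
      IsTriangle i p δ → IsTriangle j q δ' →
      ∃ (E₀ : 𝒞) (i' : E₀ ⟶ Cv) (p' : Cv ⟶ A) (m : F ⟶ E₀) (n : E₀ ⟶ D) (δ'' : E A E₀),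
        IsTriangle i' p' δ'' ∧ IsTriangle m n (pull i δ') ∧
        p' = q ≫ p ∧ i' ≫ q = n ≫ i ∧ j = m ≫ i' ∧
        push n δ'' = δ ∧ pull p δ'' = push m δ'

namespace ExtriangulatedStructure

variable {𝒞 : Type u} [Category.{v} 𝒞] [Preadditive 𝒞] [HasBinaryBiproducts 𝒞]
variable (S : ExtriangulatedStructure.{w} 𝒞)

/-- A morphism is an inflation if it occurs as the first map of some `E`-triangle. -/
def IsInflation {A B : 𝒞} (f : A ⟶ B) : Prop :=
  ∃ (X : 𝒞) (g : B ⟶ X) (δ : S.E X A), S.IsTriangle f g δ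

/-- A morphism is a deflation if it occurs as the second map of some `E`-triangle. -/
def IsDeflation {B X : 𝒞} (g : B ⟶ X) : Prop :=
  ∃ (A : 𝒞) (f : A ⟶ B) (δ : S.E X A), S.IsTriangle f g δ

/-- Condition (WIC). -/
def WIC : Prop :=
  (∀ {A B X : 𝒞} (f : A ⟶ B) (g : B ⟶ X), S.IsInflation (f ≫ g) → S.IsInflation f) ∧
  (∀ {A B X : 𝒞} (f : A ⟶ B) (g : B ⟶ X), S.IsDeflation (f ≫ g) → S.IsDeflation g)

/-- `(a, b, c)` is a morphism of `E`-triangles. -/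
def IsTriangleMor {A B X A' B' X' : 𝒞} (x : A ⟶ B) (y : B ⟶ X) (δ : S.E X A)
    (x' : A' ⟶ B') (y' : B' ⟶ X') (δ' : S.E X' A')
    (a : A ⟶ A') (b : B ⟶ B') (c : X ⟶ X') : Prop :=
  x ≫ b = a ≫ x' ∧ y ≫ c = b ≫ y' ∧ S.push a δ = S.pull c δ'

/-- A cotorsion pair `(𝒬, ℛ)`: `E(𝒬, ℛ) = 0` and every object admits the two
approximation `E`-triangles. -/
def CotorsionPair (𝒬 ℛ : Set 𝒞) : Prop :=
  (∀ (Q R : 𝒞), Q ∈ 𝒬 → R ∈ ℛ → ∀ δ : S.E Q R, δ = 0) ∧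
  (∀ X : 𝒞, ∃ (R Q : 𝒞) (f : R ⟶ Q) (g : Q ⟶ X) (δ : S.E X R),
      S.IsTriangle f g δ ∧ Q ∈ 𝒬 ∧ R ∈ ℛ) ∧
  (∀ X : 𝒞, ∃ (R Q : 𝒞) (f : X ⟶ R) (g : R ⟶ Q) (δ : S.E Q X),
      S.IsTriangle f g δ ∧ Q ∈ 𝒬 ∧ R ∈ ℛ)

/-- A cotorsion pair is hereditary if `𝒬` is closed under cocones of deflations and
`ℛ` is closed under cones of inflations. -/
def Hereditary (𝒬 ℛ : Set 𝒞) : Prop :=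
  (∀ {A B X : 𝒞} (f : A ⟶ B) (g : B ⟶ X) (δ : S.E X A),
      S.IsTriangle f g δ → B ∈ 𝒬 → X ∈ 𝒬 → A ∈ 𝒬) ∧
  (∀ {A B X : 𝒞} (f : A ⟶ B) (g : B ⟶ X) (δ : S.E X A),
      S.IsTriangle f g δ → A ∈ ℛ → B ∈ ℛ → X ∈ ℛ)

/-- A class of objects is thick: closed under direct summands and satisfying the
2-out-of-3 property on `E`-triangles. -/
def Thick (𝒲 : Set 𝒞) : Prop :=
  (∀ {X Y : 𝒞}, Y ∈ 𝒲 → (∃ (i : X ⟶ Y) (p : Y ⟶ X), i ≫ p = 𝟙 X) → X ∈ 𝒲) ∧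
  (∀ {A B X : 𝒞} (f : A ⟶ B) (g : B ⟶ X) (δ : S.E X A), S.IsTriangle f g δ →
    (A ∈ 𝒲 → B ∈ 𝒲 → X ∈ 𝒲) ∧ (A ∈ 𝒲 → X ∈ 𝒲 → B ∈ 𝒲) ∧ (B ∈ 𝒲 → X ∈ 𝒲 → A ∈ 𝒲))

/-- `(𝒬, 𝒲, ℛ)` is a Hovey triple. -/
def HoveyTriple (𝒬 𝒲 ℛ : Set 𝒞) : Prop :=
  S.Thick 𝒲 ∧ S.CotorsionPair 𝒬 (𝒲 ∩ ℛ) ∧ S.CotorsionPair (𝒬 ∩ 𝒲) ℛ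

end ExtriangulatedStructure

/-!
Since `y` is a retraction, `δ = 0` and `desc x s : A ⊞ X ≅ B`. Under this identification, with
`σ = s ≫ b`, the map `b` is the composite of deflations `map a 1 : A ⊞ X → A' ⊞ X` and
`desc x' σ : A' ⊞ X → B'`. The cocone of the first is `K` (pad the first column). For the second,
`X ⊞ B' → X'`, `(x, b') ↦ c x - y' b'` has two cocones: `A' ⊞ X`, built from the second row and
`σ`, and one that is an extension of `B'` by `K''`, built from the third column; they are
isomorphic, so `desc x' σ` is a deflation with cocone `K''`. Applying (ET4)ᵒᵖ to the composite,
with the second column as the prescribed cocone of `b`, yields the top row.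
-/

namespace CategoryTheory

variable {C : Type*} [Category C]

lemma isIso_of_isIso_comp_of_isIso_comp {P Q : C} {f : P ⟶ Q} {g : Q ⟶ P}
    [IsIso (f ≫ g)] [IsIso (g ≫ f)] : IsIso f := by
  have : IsSplitMono f := IsSplitMono.mk' ⟨g ≫ inv (f ≫ g), by simp [← Category.assoc]⟩
  have : IsSplitEpi f := IsSplitEpi.mk' ⟨inv (g ≫ f) ≫ g, by simp⟩
  exact isIso_of_mono_of_isSplitEpi f

lemma isIso_of_sub_comp_sub_eq_zero [Preadditive C] {B : C} {u : B ⟶ B}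
    (h : (𝟙 B - u) ≫ (𝟙 B - u) = 0) : IsIso u := by
  have hnil : IsNilpotent ((1 : End B) - (show End B from u)) :=
    ⟨2, by rw [pow_two, End.mul_def]; exact h⟩
  exact (isUnit_iff_isIso u).mp (by simpa using hnil.isUnit_one_sub)

end CategoryTheory

namespace ExtriangulatedStructure

variable {𝒞 : Type u} [Category.{v} 𝒞] [Preadditive 𝒞] [HasBinaryBiproducts 𝒞]

section Biadditivity

variable (S : ExtriangulatedStructure.{w} 𝒞)

@[simp] lemma pull_zero {X' X A : 𝒞} (c : X' ⟶ X) : S.pull c (0 : S.E X A) = 0 :=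
  (AddMonoidHom.mk' (S.pull c) (S.pull_add c)).map_zero

@[simp] lemma push_zero {X A A' : 𝒞} (a : A ⟶ A') : S.push a (0 : S.E X A) = 0 :=
  (AddMonoidHom.mk' (S.push a) (S.push_add a)).map_zero

@[simp] lemma zero_pull {X' X A : 𝒞} (δ : S.E X A) : S.pull (0 : X' ⟶ X) δ = 0 :=
  (AddMonoidHom.mk' (fun c : X' ⟶ X => S.pull c δ) (fun c c' => S.add_pull c c' δ)).map_zero

lemma sub_push {X A A' : 𝒞} (a a' : A ⟶ A') (δ : S.E X A) :
    S.push (a - a') δ = S.push a δ - S.push a' δ :=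
  (AddMonoidHom.mk' (fun a : A ⟶ A' => S.push a δ) (fun a a' => S.add_push a a' δ)).map_sub a a'

lemma pull_comp_pull {X'' X' X A : 𝒞} (c' : X'' ⟶ X') (c : X' ⟶ X) (δ : S.E X A) :
    S.pull c' (S.pull c δ) = S.pull (c' ≫ c) δ :=
  (S.pull_comp c' c δ).symm

lemma push_push {X A A' A'' : 𝒞} (a : A ⟶ A') (a' : A' ⟶ A'') (δ : S.E X A) :
    S.push a' (S.push a δ) = S.push (a ≫ a') δ :=
  (S.push_comp a a' δ).symm

lemma ext_biprod {X₁ X₂ A : 𝒞} {δ δ' : S.E (X₁ ⊞ X₂) A}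
    (h₁ : S.pull biprod.inl δ = S.pull biprod.inl δ')
    (h₂ : S.pull biprod.inr δ = S.pull biprod.inr δ') : δ = δ' := by
  rw [← S.pull_id δ, ← S.pull_id δ', ← biprod.total, S.add_pull, S.add_pull]
  simp only [S.pull_comp, h₁, h₂]

end Biadditivity

variable {S : ExtriangulatedStructure.{w} 𝒞}

namespace IsTriangle

section

variable {A B X : 𝒞} {x : A ⟶ B} {y : B ⟶ X} {δ : S.E X A}

lemma comp_eq_zero (h : S.IsTriangle x y δ) : x ≫ y = 0 := by
  obtain ⟨c, -, hc⟩ := S.ET3 (𝟙 A) (biprod.desc x (𝟙 B)) (S.realize_zero A B) h (by simp)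
  simpa using congrArg (biprod.inl ≫ ·) hc.symm

lemma pull_eq_zero (h : S.IsTriangle x y δ) : S.pull y δ = 0 := by
  obtain ⟨c, hc, hyc⟩ := S.ET3 (𝟙 A) (biprod.desc x (𝟙 B)) (S.realize_zero A B) h (by simp)
  have : c = y := by simpa using congrArg (biprod.inr ≫ ·) hyc
  rw [← this, ← hc, S.push_id]

lemma push_eq_zero (h : S.IsTriangle x y δ) : S.push x δ = 0 := by
  obtain ⟨a, ha, hxa⟩ := S.ET3op (biprod.lift (𝟙 B) y) (𝟙 X) h (S.realize_zero B X) (by simp)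
  have : a = x := by simpa using congrArg (· ≫ biprod.fst) hxa.symm
  rw [← this, ha, S.pull_zero]

lemma exists_comp_eq {T : 𝒞} (h : S.IsTriangle x y δ) (f : T ⟶ B) (hf : f ≫ y = 0) :
    ∃ g : T ⟶ A, g ≫ x = f := by
  obtain ⟨g, -, hg⟩ := S.ET3op (biprod.desc f 0) (0 : T ⟶ X) (S.realize_zero T T) h
    (by ext <;> simp [hf])
  exact ⟨g, by simpa using hg.symm⟩

lemma exists_eq_comp {T : 𝒞} (h : S.IsTriangle x y δ) (f : B ⟶ T) (hf : x ≫ f = 0) :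
    ∃ g : X ⟶ T, y ≫ g = f := by
  obtain ⟨g, -, hg⟩ :=
    S.ET3 x (biprod.lift (𝟙 B) f) h (S.realize_zero B T) (by ext <;> simp [hf])
  exact ⟨g, by simpa using hg⟩

lemma exists_eq_comp_of_push_eq_zero {T : 𝒞} (h : S.IsTriangle x y δ) (f : A ⟶ T)
    (hf : S.push f δ = 0) : ∃ g : B ⟶ T, x ≫ g = f := by
  obtain ⟨b, hb, -⟩ := S.realize_mor f (𝟙 X) h (S.realize_zero T X) (by rw [hf, S.pull_id])
  exact ⟨b ≫ biprod.fst, by simp [reassoc_of% hb]⟩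

lemma isIso_of_comp_eq_self (h : S.IsTriangle x y δ) {u : B ⟶ B} (hx : x ≫ u = x)
    (hy : u ≫ y = y) : IsIso u := by
  obtain ⟨g, hg⟩ := h.exists_eq_comp (𝟙 B - u) (by simp [hx])
  refine isIso_of_sub_comp_sub_eq_zero ?_
  calc (𝟙 B - u) ≫ (𝟙 B - u) = ((𝟙 B - u) ≫ y) ≫ g := by rw [Category.assoc, hg]
    _ = 0 := by simp [hy]

lemma isIso_of_comp_eq_self_of_push_eq_self (h : S.IsTriangle x y δ) {u : A ⟶ A}
    (hx : u ≫ x = x) (hδ : S.push u δ = δ) : IsIso u := by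
  obtain ⟨g, hg⟩ :=
    h.exists_eq_comp_of_push_eq_zero (𝟙 A - u) (by rw [S.sub_push, S.push_id, hδ, sub_self])
  refine isIso_of_sub_comp_sub_eq_zero ?_
  calc (𝟙 A - u) ≫ (𝟙 A - u) = ((𝟙 A - u) ≫ x) ≫ g := by rw [Category.assoc, hg]
    _ = 0 := by simp [hx]

end

section

variable {A B X A' B' X' : 𝒞} {x : A ⟶ B} {y : B ⟶ X} {δ : S.E X A}
  {x' : A' ⟶ B'} {y' : B' ⟶ X'} {δ' : S.E X' A'} {a : A ⟶ A'} {b : B ⟶ B'} {c : X ⟶ X'}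

lemma isIso_of_isTriangleMor (h : S.IsTriangle x y δ) (h' : S.IsTriangle x' y' δ')
    (hm : S.IsTriangleMor x y δ x' y' δ' a b c) [IsIso a] [IsIso c] : IsIso b := by
  obtain ⟨hxb, hyc, hδ⟩ := hm
  have hδ' : S.push (inv a) δ' = S.pull (inv c) δ := by
    rw [← S.pull_id δ', ← IsIso.inv_hom_id c, S.pull_comp, ← hδ, ← S.pull_push, S.push_push,
      IsIso.hom_inv_id, S.push_id]
  obtain ⟨b', hxb', hyc'⟩ := S.realize_mor (inv a) (inv c) h' h hδ'
  have : IsIso (b ≫ b') := h.isIso_of_comp_eq_self (by simp [reassoc_of% hxb, hxb'])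
    (by simp [← hyc', ← reassoc_of% hyc])
  have : IsIso (b' ≫ b) := h'.isIso_of_comp_eq_self (by simp [reassoc_of% hxb', hxb])
    (by simp [← hyc, ← reassoc_of% hyc'])
  exact isIso_of_isIso_comp_of_isIso_comp (g := b')

lemma isIso_left_of_isTriangleMor (h : S.IsTriangle x y δ) (h' : S.IsTriangle x' y' δ')
    (hm : S.IsTriangleMor x y δ x' y' δ' a b c) [IsIso b] [IsIso c] : IsIso a := by
  obtain ⟨hxb, hyc, hδ⟩ := hm
  obtain ⟨a', hδ', hxa'⟩ := S.ET3op (inv b) (inv c) h' h (by simp [← reassoc_of% hyc])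
  have : IsIso (a ≫ a') := by
    refine h.isIso_of_comp_eq_self_of_push_eq_self
      (by rw [Category.assoc, ← hxa', ← reassoc_of% hxb, IsIso.hom_inv_id, Category.comp_id]) ?_
    rw [← S.push_push, hδ, ← S.pull_push, hδ', S.pull_comp_pull, IsIso.hom_inv_id, S.pull_id]
  have : IsIso (a' ≫ a) := by
    refine h'.isIso_of_comp_eq_self_of_push_eq_self
      (by rw [Category.assoc, ← hxb, ← reassoc_of% hxa', IsIso.inv_hom_id, Category.comp_id]) ?_
    rw [← S.push_push, hδ', ← S.pull_push, hδ, S.pull_comp_pull, IsIso.inv_hom_id, S.pull_id]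
  exact isIso_of_isIso_comp_of_isIso_comp (g := a')

lemma of_isTriangleMor (h : S.IsTriangle x y δ) (hm : S.IsTriangleMor x y δ x' y' δ' a b c)
    [IsIso a] [IsIso b] [IsIso c] : S.IsTriangle x' y' δ' := by
  obtain ⟨B₂, x₂, y₂, h₂⟩ := S.realize_exists δ'
  obtain ⟨b₂, hxb₂, hyc₂⟩ := S.realize_mor a c h h₂ hm.2.2
  have : IsIso b₂ := h.isIso_of_isTriangleMor h₂ ⟨hxb₂, hyc₂, hm.2.2⟩
  have hx : x₂ ≫ inv b₂ ≫ b = x' := by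
    rw [← cancel_epi a, ← reassoc_of% hxb₂, IsIso.hom_inv_id_assoc, hm.1]
  have hy : inv b ≫ b₂ ≫ y₂ = y' := by rw [← hyc₂, hm.2.1, IsIso.inv_hom_id_assoc]
  simpa [hx, hy] using S.realize_iso x₂ y₂ δ' (asIso (inv b₂ ≫ b)) h₂

end

lemma isIso_desc {A W X : 𝒞} {m : A ⟶ W} {n : W ⟶ X} (h : S.IsTriangle m n 0) {t : X ⟶ W}
    (ht : t ≫ n = 𝟙 X) : IsIso (biprod.desc m t) :=
  (S.realize_zero A X).isIso_of_isTriangleMor h (a := 𝟙 A) (c := 𝟙 X)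
    ⟨by simp, by ext <;> simp [h.comp_eq_zero, ht], by simp [S.push_id, S.pull_id]⟩

lemma exists_isIso {E₀ E₁ B C : 𝒞} {i₀ : E₀ ⟶ B} {i₁ : E₁ ⟶ B} {p : B ⟶ C}
    {δ₀ : S.E C E₀} {δ₁ : S.E C E₁} (h₀ : S.IsTriangle i₀ p δ₀) (h₁ : S.IsTriangle i₁ p δ₁) :
    ∃ τ : E₀ ⟶ E₁, IsIso τ ∧ τ ≫ i₁ = i₀ ∧ S.push τ δ₀ = δ₁ := by
  obtain ⟨τ, hτδ, hτ⟩ := S.ET3op (𝟙 B) (𝟙 C) h₀ h₁ (by simp)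
  rw [S.pull_id] at hτδ
  exact ⟨τ, h₀.isIso_left_of_isTriangleMor h₁ (b := 𝟙 B) (c := 𝟙 C)
    ⟨hτ, by simp, by rw [hτδ, S.pull_id]⟩, by simpa using hτ.symm, hτδ⟩

lemma comp_inl_map {A B C : 𝒞} {f : A ⟶ B} {g : B ⟶ C} {δ : S.E C A}
    (h : S.IsTriangle f g δ) (Z : 𝒞) :
    S.IsTriangle (f ≫ biprod.inl : A ⟶ B ⊞ Z) (biprod.map g (𝟙 Z)) (S.pull biprod.fst δ) := by
  obtain ⟨E₀, _, h', d, e, δ'', T₁, T₂, rfl, hgd, hsnd, hδ, -⟩ :=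
    S.ET4 f g δ biprod.inl biprod.snd 0 h (S.realize_zero B Z)
  rw [S.push_zero] at T₂
  set θ := biprod.desc d (biprod.inr ≫ h')
  have : IsIso θ := T₂.isIso_desc (by simp [← hsnd])
  have hθ : biprod.map g (𝟙 Z) ≫ θ = h' := by ext <;> simp [θ, hgd]
  have hθδ : S.pull θ δ'' = S.pull biprod.fst δ := by
    apply S.ext_biprod <;> simp only [S.pull_comp_pull]
    · simp [θ, hδ, S.pull_id]
    · simp [θ, ← S.pull_comp_pull, T₁.pull_eq_zero]
  refine T₁.of_isTriangleMor (a := 𝟙 A) (b := 𝟙 _) (c := inv θ) ⟨by simp, ?_, ?_⟩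
  · simp [← hθ]
  · rw [S.push_id, ← hθδ, S.pull_comp_pull, IsIso.inv_hom_id, S.pull_id]

lemma comp_inr_map {A B C : 𝒞} {f : A ⟶ B} {g : B ⟶ C} {δ : S.E C A}
    (h : S.IsTriangle f g δ) (Z : 𝒞) :
    S.IsTriangle (f ≫ biprod.inr : A ⟶ Z ⊞ B) (biprod.map (𝟙 Z) g) (S.pull biprod.snd δ) :=
  (h.comp_inl_map Z).of_isTriangleMor (a := 𝟙 A) (b := (biprod.braiding B Z).hom)
    (c := (biprod.braiding C Z).hom)
    ⟨by ext <;> simp, by ext <;> simp, by simp [S.push_id, S.pull_comp_pull]⟩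

/-- (ET4)ᵒᵖ for a composite of deflations whose cocone is prescribed. -/
lemma exists_isTriangle_of_comp {D B A F Cv K : 𝒞} {j : D ⟶ B} {p : B ⟶ A} {π : S.E A D}
    {i : F ⟶ Cv} {q : Cv ⟶ B} {ρ : S.E B F} {k : K ⟶ Cv} {κ : S.E A K}
    (hp : S.IsTriangle j p π) (hq : S.IsTriangle i q ρ) (hk : S.IsTriangle k (q ≫ p) κ) :
    ∃ (m : F ⟶ K) (n : K ⟶ D), S.IsTriangle m n (S.pull j ρ) ∧ m ≫ k = i ∧
      n ≫ j = k ≫ q ∧ S.push n κ = π ∧ S.pull p κ = S.push m ρ := by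
  obtain ⟨E₀, i', _, m, n, ε, T₁, T₂, rfl, hi'q, him, hnε, hpε⟩ := S.ET4op j p π i q ρ hp hq
  obtain ⟨τ, _, hτ, hτε⟩ := T₁.exists_isIso hk
  refine ⟨m ≫ τ, inv τ ≫ n, T₂.of_isTriangleMor (a := 𝟙 F) (b := τ) (c := 𝟙 D)
    ⟨by simp, by simp, by simp [S.push_id, S.pull_id]⟩, by rw [Category.assoc, hτ, him],
    ?_, ?_, ?_⟩
  · rw [Category.assoc, ← hi'q, ← hτ, Category.assoc, IsIso.inv_hom_id_assoc]
  · rw [← hτε, ← S.push_push, S.push_push τ, IsIso.hom_inv_id, S.push_id, hnε]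
  · rw [← hτε, S.pull_push, hpε, S.push_push]

end IsTriangle

lemma isTriangle_lift_id_desc {U W : 𝒞} (u : U ⟶ W) :
    S.IsTriangle (biprod.lift (𝟙 U) u) (biprod.desc u (-𝟙 W)) 0 := by
  have : IsIso (biprod.desc (biprod.lift (𝟙 U) u) (-biprod.inr) : U ⊞ W ⟶ U ⊞ W) :=
    ⟨biprod.desc (biprod.lift (𝟙 U) u) (-biprod.inr), by ext <;> simp, by ext <;> simp⟩
  exact (S.realize_zero U W).of_isTriangleMor (a := 𝟙 U)
    (b := biprod.desc (biprod.lift (𝟙 U) u) (-biprod.inr)) (c := 𝟙 W)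
    ⟨by simp, by ext <;> simp, by simp [S.push_id, S.pull_id]⟩

lemma isTriangle_lift_desc_id {U W : 𝒞} (u : U ⟶ W) :
    S.IsTriangle (biprod.lift u (𝟙 U)) (biprod.desc (𝟙 W) (-u)) 0 := by
  have : IsIso (biprod.desc (biprod.lift u (𝟙 U)) biprod.inl : U ⊞ W ⟶ W ⊞ U) :=
    ⟨biprod.lift biprod.snd (biprod.fst - biprod.snd ≫ u), by ext <;> simp, by ext <;> simp⟩
  exact (S.realize_zero U W).of_isTriangleMor (a := 𝟙 U)
    (b := biprod.desc (biprod.lift u (𝟙 U)) biprod.inl) (c := 𝟙 W)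
    ⟨by simp, by ext <;> simp, by simp [S.push_id, S.pull_id]⟩

namespace IsTriangle

section HomotopyPullback

variable {A' B' X' X K'' : 𝒞} {x' : A' ⟶ B'} {y' : B' ⟶ X'} {δ' : S.E X' A'}
  {k'' : K'' ⟶ X} {c : X ⟶ X'} {κ'' : S.E X' K''} {σ : X ⟶ B'}

lemma exists_isTriangle_lift_snd_desc (h : S.IsTriangle x' y' δ') (hσ : σ ≫ y' = c) :
    ∃ ε, S.IsTriangle (biprod.lift biprod.snd (biprod.desc x' σ) : A' ⊞ X ⟶ X ⊞ B')
      (biprod.desc c (-y')) ε := by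
  obtain ⟨W, i, _, m, n, ε, T₁, T₂, rfl, hin, hm, -, -⟩ :=
    S.ET4op (biprod.lift (𝟙 X) c) (biprod.desc c (-𝟙 X')) 0 (x' ≫ biprod.inr)
      (biprod.map (𝟙 X) y') (S.pull biprod.snd δ') (isTriangle_lift_id_desc c)
      (h.comp_inr_map X)
  have hD : biprod.map (𝟙 X) y' ≫ biprod.desc c (-𝟙 X') = biprod.desc c (-y') := by
    ext <;> simp
  rw [hD] at T₁
  rw [S.pull_comp_pull, biprod.lift_snd, ← hσ, S.pull_comp, h.pull_eq_zero, S.pull_zero] at T₂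
  have hn : n = i ≫ biprod.fst := by simpa using (congrArg (· ≫ biprod.fst) hin).symm
  obtain ⟨t, ht⟩ := T₁.exists_comp_eq (biprod.lift (𝟙 X) σ) (by simp [hσ])
  have : IsIso (biprod.desc m t) := T₂.isIso_desc (by simp [hn, reassoc_of% ht])
  have hθ : biprod.desc m t ≫ i = biprod.lift biprod.snd (biprod.desc x' σ) := by
    ext <;> simp [reassoc_of% ht, ← reassoc_of% hm]
  exact ⟨_, T₁.of_isTriangleMor (a := inv (biprod.desc m t)) (b := 𝟙 _) (c := 𝟙 X')
    ⟨by simp [← hθ], by simp, by rw [S.pull_id]⟩⟩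

lemma exists_isTriangle_desc_neg (hk : S.IsTriangle k'' c κ'') (y' : B' ⟶ X') :
    ∃ (W : 𝒞) (i : W ⟶ X ⊞ B') (ε : S.E X' W) (m : K'' ⟶ W) (n : W ⟶ B'),
      S.IsTriangle i (biprod.desc c (-y')) ε ∧ S.IsTriangle m n (S.pull y' κ'') ∧
      i ≫ biprod.snd = n ∧ m ≫ i ≫ biprod.fst = k'' := by
  obtain ⟨W, i, _, m, n, ε, T₁, T₂, rfl, hin, hm, -, -⟩ :=
    S.ET4op (biprod.lift y' (𝟙 B')) (biprod.desc (𝟙 X') (-y')) 0 (k'' ≫ biprod.inl)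
      (biprod.map c (𝟙 B')) (S.pull biprod.fst κ'') (isTriangle_lift_desc_id y')
      (hk.comp_inl_map B')
  have hD : biprod.map c (𝟙 B') ≫ biprod.desc (𝟙 X') (-y') = biprod.desc c (-y') := by
    ext <;> simp
  rw [hD] at T₁
  rw [S.pull_comp_pull, biprod.lift_fst] at T₂
  refine ⟨W, i, ε, m, n, T₁, T₂, by simpa using congrArg (· ≫ biprod.snd) hin, ?_⟩
  simpa using congrArg (· ≫ biprod.fst) hm.symm

lemma exists_isTriangle_desc (h : S.IsTriangle x' y' δ') (hk : S.IsTriangle k'' c κ'')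
    (hσ : σ ≫ y' = c) :
    ∃ j : K'' ⟶ A' ⊞ X, S.IsTriangle j (biprod.desc x' σ) (S.pull y' κ'') ∧
      j ≫ biprod.snd = k'' := by
  obtain ⟨ε, T₁⟩ := h.exists_isTriangle_lift_snd_desc hσ
  obtain ⟨W, i, _, m, n, T₂, T₃, hin, hmi⟩ := hk.exists_isTriangle_desc_neg y'
  obtain ⟨τ, _, hτ, -⟩ := T₂.exists_isIso T₁
  refine ⟨m ≫ τ, T₃.of_isTriangleMor (a := 𝟙 K'') (b := τ) (c := 𝟙 B')
    ⟨by simp, ?_, by simp [S.push_id, S.pull_id]⟩, ?_⟩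
  · rw [Category.comp_id, ← hin, ← hτ, Category.assoc, biprod.lift_snd]
  · rw [← hmi, ← hτ, Category.assoc, Category.assoc, biprod.lift_fst]

end HomotopyPullback

end IsTriangle

end ExtriangulatedStructure

open CategoryTheory Limits in
theorem stmt3_general {𝒞 : Type u} [Category.{v} 𝒞] [Preadditive 𝒞] [HasBinaryBiproducts 𝒞]
    (S : ExtriangulatedStructure.{w} 𝒞)
    {K K' K'' A B X A' B' X' : 𝒞}
    (x : A ⟶ B) (y : B ⟶ X) (δ : S.E X A)
    (x' : A' ⟶ B') (y' : B' ⟶ X') (δ' : S.E X' A')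
    (k : K ⟶ A) (a : A ⟶ A') (κ : S.E A' K)
    (k' : K' ⟶ B) (b : B ⟶ B') (κ' : S.E B' K')
    (k'' : K'' ⟶ X) (c : X ⟶ X') (κ'' : S.E X' K'')
    (hrow1 : S.IsTriangle x y δ) (hrow2 : S.IsTriangle x' y' δ')
    (hcol1 : S.IsTriangle k a κ) (hcol2 : S.IsTriangle k' b κ')
    (hcol3 : S.IsTriangle k'' c κ'')
    (hmor : S.IsTriangleMor x y δ x' y' δ' a b c)
    (hy : ∃ s : X ⟶ B, s ≫ y = 𝟙 X) :
    ∃ (m : K ⟶ K') (n : K' ⟶ K'') (δ'' : S.E K'' K),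
      S.IsTriangle m n δ'' ∧
      S.IsTriangleMor m n δ'' x y δ k k' k'' ∧
      S.IsTriangleMor k a κ k' b κ' m x x' ∧
      S.IsTriangleMor k' b κ' k'' c κ'' n y y' := by
  obtain ⟨s, hs⟩ := hy
  obtain ⟨hxb, hyc, -⟩ := hmor
  have hδ : δ = 0 := by rw [← S.pull_id δ, ← hs, S.pull_comp, hrow1.pull_eq_zero, S.pull_zero]
  subst hδ
  have : IsIso (biprod.desc x s) := hrow1.isIso_desc hs
  have hσ : (s ≫ b) ≫ y' = c := by rw [Category.assoc, ← hyc, reassoc_of% hs]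
  obtain ⟨j, hj, hjk⟩ := hrow2.exists_isTriangle_desc hcol3 hσ
  set q := inv (biprod.desc x s) ≫ biprod.map a (𝟙 X)
  have hq : S.IsTriangle (k ≫ x) q (S.pull biprod.fst κ) :=
    (hcol1.comp_inl_map X).of_isTriangleMor (a := 𝟙 K) (b := biprod.desc x s) (c := 𝟙 _)
      ⟨by simp, by simp [q], by simp [S.push_id, S.pull_id]⟩
  have hqb : q ≫ biprod.desc x' (s ≫ b) = b := by
    rw [← cancel_epi (biprod.desc x s)]; ext <;> simp [q, hxb]
  have hqy : q ≫ biprod.snd = y := by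
    rw [← cancel_epi (biprod.desc x s)]; ext <;> simp [q, hrow1.comp_eq_zero, hs]
  obtain ⟨m, n, hmn, hmk, hnj, hnκ, hpκ⟩ := hj.exists_isTriangle_of_comp hq (hqb ▸ hcol2)
  have hnk : n ≫ k'' = k' ≫ y := by rw [← hjk, ← Category.assoc, hnj, Category.assoc, hqy]
  refine ⟨m, n, S.pull j (S.pull biprod.fst κ), hmn, ⟨hmk, hnk, ?_⟩,
    ⟨hmk.symm, hxb.symm, ?_⟩, ⟨hnk.symm, hyc.symm, hnκ⟩⟩
  · rw [S.pull_zero, ← S.pull_push, ← S.pull_push, hcol1.push_eq_zero, S.pull_zero, S.pull_zero]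
  · calc S.push m κ = S.pull biprod.inl (S.push m (S.pull (biprod.fst : A' ⊞ X ⟶ A') κ)) := by
          rw [← S.pull_push, S.pull_comp_pull, biprod.inl_fst, S.pull_id]
      _ = S.pull x' κ' := by rw [← hpκ, S.pull_comp_pull, biprod.inl_desc]

open CategoryTheory Limits in
/-- under (WIC), a 3×3 diagram whose bottom two rows and three columns are
E-triangles, with `(a,b,c)` a morphism of E-triangles and `y` a retraction, can be completed
by a top row `K → K' → K''` which is an E-triangle, compatibly. -/
theorem stmt3 {𝒞 : Type u} [Category.{v} 𝒞] [Preadditive 𝒞] [HasBinaryBiproducts 𝒞]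
    (S : ExtriangulatedStructure.{w} 𝒞) (hWIC : S.WIC)
    {K K' K'' A B X A' B' X' : 𝒞}
    (x : A ⟶ B) (y : B ⟶ X) (δ : S.E X A)
    (x' : A' ⟶ B') (y' : B' ⟶ X') (δ' : S.E X' A')
    (k : K ⟶ A) (a : A ⟶ A') (κ : S.E A' K)
    (k' : K' ⟶ B) (b : B ⟶ B') (κ' : S.E B' K')
    (k'' : K'' ⟶ X) (c : X ⟶ X') (κ'' : S.E X' K'')
    (hrow1 : S.IsTriangle x y δ) (hrow2 : S.IsTriangle x' y' δ')
    (hcol1 : S.IsTriangle k a κ) (hcol2 : S.IsTriangle k' b κ')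
    (hcol3 : S.IsTriangle k'' c κ'')
    (hmor : S.IsTriangleMor x y δ x' y' δ' a b c)
    (hy : ∃ s : X ⟶ B, s ≫ y = 𝟙 X) :
    ∃ (m : K ⟶ K') (n : K' ⟶ K'') (δ'' : S.E K'' K),
      S.IsTriangle m n δ'' ∧
      S.IsTriangleMor m n δ'' x y δ k k' k'' ∧
      S.IsTriangleMor k a κ k' b κ' m x x' ∧
      S.IsTriangleMor k' b κ' k'' c κ'' n y y' :=
  stmt3_general S x y δ x' y' δ' k a κ k' b κ' k'' c κ'' hrow1 hrow2 hcol1 hcol2 hcol3 hmor hy
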